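/- Reductive subtyping distributes pairs over unions on the right component: for all MiniJl types τ1, τ21, τ22, it holds that τ1 × (τ21 ∪ τ22) ≤r (τ1 × τ21) ∪ (τ1 × τ22). -/
import Mathlib


/-- MiniJl types -/
inductive Ty : Type
  | pair : Ty → Ty → Ty
  | union : Ty → Ty → Ty
  | int : Ty
  | flt : Ty
  | cmplx : Ty
  | str : Ty
  | real : Ty
  | num : Ty
deriving DecidableEq

/-- Value types: concrete nominal types and pairs of value types. -/
inductive ValTy : Ty → Prop
  | int : ValTy .int
  | flt : ValTy .flt
  | cmplx : ValTy .cmplx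
  | str : ValTy .str
  | pair {v1 v2 : Ty} : ValTy v1 → ValTy v2 → ValTy (.pair v1 v2)

/-- Matching relation `v ⋖ τ`. -/
inductive Matches : Ty → Ty → Prop
  | int : Matches .int .int
  | flt : Matches .flt .flt
  | cmplx : Matches .cmplx .cmplx
  | str : Matches .str .str
  | intReal : Matches .int .real
  | fltReal : Matches .flt .real
  | intNum : Matches .int .num
  | fltNum : Matches .flt .num
  | cmplxNum : Matches .cmplx .num
  | pair {v1 v2 t1 t2 : Ty} : Matches v1 t1 → Matches v2 t2 →
      Matches (.pair v1 v2) (.pair t1 t2)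
  | unionL {v t1 t2 : Ty} : Matches v t1 → Matches v (.union t1 t2)
  | unionR {v t1 t2 : Ty} : Matches v t2 → Matches v (.union t1 t2)

/-- Matching-based semantic subtyping. -/
def SemSub (t1 t2 : Ty) : Prop :=
  ∀ v : Ty, ValTy v → Matches v t1 → Matches v t2

/-- Tag interpretation of types as sets of value types. -/
def interp : Ty → Set Ty
  | .int => {.int}
  | .flt => {.flt}
  | .cmplx => {.cmplx}
  | .str => {.str}
  | .real => {.int, .flt}
  | .num => {.int, .flt, .cmplx}
  | .pair t1 t2 => {v | ∃ v1 ∈ interp t1, ∃ v2 ∈ interp t2, v = .pair v1 v2}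
  | .union t1 t2 => interp t1 ∪ interp t2

/-- Declarative subtyping. -/
inductive DeclSub : Ty → Ty → Prop
  | refl (t : Ty) : DeclSub t t
  | trans {t1 t2 t3 : Ty} : DeclSub t1 t2 → DeclSub t2 t3 → DeclSub t1 t3
  | intReal : DeclSub .int .real
  | fltReal : DeclSub .flt .real
  | realNum : DeclSub .real .num
  | cmplxNum : DeclSub .cmplx .num
  | realUnion : DeclSub .real (.union .int .flt)
  | numUnion : DeclSub .num (.union .real .cmplx)
  | pair {t1 t2 t1' t2' : Ty} : DeclSub t1 t1' → DeclSub t2 t2' →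
      DeclSub (.pair t1 t2) (.pair t1' t2')
  | unionL {t1 t2 t' : Ty} : DeclSub t1 t' → DeclSub t2 t' →
      DeclSub (.union t1 t2) t'
  | unionR1 (t1 t2 : Ty) : DeclSub t1 (.union t1 t2)
  | unionR2 (t1 t2 : Ty) : DeclSub t2 (.union t1 t2)
  | distr1 (t11 t12 t2 : Ty) :
      DeclSub (.pair (.union t11 t12) t2)
        (.union (.pair t11 t2) (.pair t12 t2))
  | distr2 (t1 t21 t22 : Ty) :
      DeclSub (.pair t1 (.union t21 t22))
        (.union (.pair t1 t21) (.pair t1 t22))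

/-- Normal form predicate. -/
inductive InNF : Ty → Prop
  | val {v : Ty} : ValTy v → InNF v
  | union {t1 t2 : Ty} : InNF t1 → InNF t2 → InNF (.union t1 t2)

/-- Union of pairs -/
def unprs : Ty → Ty → Ty
  | .union t11 t12, t2 => .union (unprs t11 t2) (unprs t12 t2)
  | t1, .union t21 t22 => .union (unprs t1 t21) (unprs t1 t22)
  | t1, t2 => .pair t1 t2

/-- Normalization function. -/
def NF : Ty → Ty
  | .int => .int
  | .flt => .flt
  | .cmplx => .cmplx
  | .str => .str
  | .real => .union .int .flt
  | .num => .union (.union .int .flt) .cmplx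
  | .pair t1 t2 => unprs (NF t1) (NF t2)
  | .union t1 t2 => .union (NF t1) (NF t2)

/-- Reductive subtyping. -/
inductive RedSub : Ty → Ty → Prop
  | intRefl : RedSub .int .int
  | fltRefl : RedSub .flt .flt
  | cmplxRefl : RedSub .cmplx .cmplx
  | strRefl : RedSub .str .str
  | intReal : RedSub .int .real
  | fltReal : RedSub .flt .real
  | cmplxNum : RedSub .cmplx .num
  | intNum : RedSub .int .num
  | fltNum : RedSub .flt .num
  | pair {t1 t2 t1' t2' : Ty} : RedSub t1 t1' → RedSub t2 t2' →
      RedSub (.pair t1 t2) (.pair t1' t2')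
  | unionL {t1 t2 t' : Ty} : RedSub t1 t' → RedSub t2 t' →
      RedSub (.union t1 t2) t'
  | unionR1 {t t1' t2' : Ty} : RedSub t t1' → RedSub t (.union t1' t2')
  | unionR2 {t t1' t2' : Ty} : RedSub t t2' → RedSub t (.union t1' t2')
  | nf {t t' : Ty} : RedSub (NF t) t' → RedSub t t'

lemma union_inv {s t : Ty} (h : RedSub s t) :
    ∀ a1 a2, s = .union a1 a2 → RedSub a1 t ∧ RedSub a2 t := by
  induction h with
  | unionL h1 h2 _ _ =>
    intro a1 a2 he
    cases he
    exact ⟨h1, h2⟩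
  | unionR1 _ ih =>
    intro a1 a2 he
    subst he
    obtain ⟨x, y⟩ := ih a1 a2 rfl
    exact ⟨.unionR1 x, .unionR1 y⟩
  | unionR2 _ ih =>
    intro a1 a2 he
    subst he
    obtain ⟨x, y⟩ := ih a1 a2 rfl
    exact ⟨.unionR2 x, .unionR2 y⟩
  | nf _ ih =>
    intro a1 a2 he
    subst he
    obtain ⟨x, y⟩ := ih (NF a1) (NF a2) rfl
    exact ⟨.nf x, .nf y⟩
  | pair _ _ _ _ => exact fun a1 a2 he => nomatch he
  | _ => exact fun a1 a2 he => nomatch he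

lemma unprs_sub : ∀ (a b t1 t2 : Ty), RedSub a t1 → RedSub b t2 →
    RedSub (unprs a b) (.pair t1 t2) := by
  intro a
  induction a with
  | union a1 a2 ih1 ih2 =>
    intro b t1 t2 ha hb
    obtain ⟨h1, h2⟩ := union_inv ha a1 a2 rfl
    simp only [unprs]
    exact RedSub.unionL (ih1 b _ _ h1 hb) (ih2 b _ _ h2 hb)
  | _ =>
    intro b t1 t2 ha hb
    induction b with
    | union b1 b2 jh1 jh2 =>
      obtain ⟨h1, h2⟩ := union_inv hb b1 b2 rfl
      simp only [unprs]
      exact RedSub.unionL (jh1 h1) (jh2 h2)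
    | _ => simp only [unprs]; exact RedSub.pair ha hb

lemma nf_self : ∀ t : Ty, RedSub (NF t) t := by
  intro t
  induction t with
  | pair t1 t2 ih1 ih2 => exact unprs_sub _ _ _ _ ih1 ih2
  | union t1 t2 ih1 ih2 =>
    exact RedSub.unionL (RedSub.unionR1 ih1) (RedSub.unionR2 ih2)
  | int => exact RedSub.intRefl
  | flt => exact RedSub.fltRefl
  | cmplx => exact RedSub.cmplxRefl
  | str => exact RedSub.strRefl
  | real => exact RedSub.unionL RedSub.intReal RedSub.fltReal
  | num =>
    exact RedSub.unionL (RedSub.unionL RedSub.intNum RedSub.fltNum) RedSub.cmplxNum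

lemma unprs_union_right : ∀ (a b c t1 t21 t22 : Ty),
    RedSub a t1 → RedSub b t21 → RedSub c t22 →
    RedSub (unprs a (.union b c)) (.union (.pair t1 t21) (.pair t1 t22)) := by
  intro a
  induction a with
  | union a1 a2 ih1 ih2 =>
    intro b c t1 t21 t22 ha hb hc
    obtain ⟨h1, h2⟩ := union_inv ha a1 a2 rfl
    simp only [unprs]
    exact RedSub.unionL (ih1 b c _ _ _ h1 hb hc) (ih2 b c _ _ _ h2 hb hc)
  | _ =>
    intro b c t1 t21 t22 ha hb hc
    simp only [unprs]
    exact RedSub.unionL (RedSub.unionR1 (unprs_sub _ _ _ _ ha hb))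
      (RedSub.unionR2 (unprs_sub _ _ _ _ ha hc))

theorem redSub_distr2 (t1 t21 t22 : Ty) :
    RedSub (.pair t1 (.union t21 t22)) (.union (.pair t1 t21) (.pair t1 t22)) := by
  apply RedSub.nf
  show RedSub (unprs (NF t1) (.union (NF t21) (NF t22))) _
  exact unprs_union_right _ _ _ _ _ _ (nf_self t1) (nf_self t21) (nf_self t22)
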